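/- arXiv:2409.16423 — 4 statements merged into one kernel-verified Lean document; each statement's English description precedes it below -/
import Mathlib

section
/- Let n ≥ 1, p ∈ I_n, and let v ∈ ℝ³ be a vector with all entries positive such that M_p · v = μ v for some real number μ (so v is a Perron–Frobenius eigenvector of M_p). Then the first entry of v equals the third entry of v if and only if p is symmetric. -/
open Matrix

noncomputable section

/-- `M1 = [[1,1,0],[0,1,0],[0,0,1]]`. -/
def M1 : Matrix (Fin 3) (Fin 3) ℝ := !![1, 1, 0; 0, 1, 0; 0, 0, 1]

/-- `M2 = [[1,0,0],[1,1,1],[0,0,1]]`. -/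
def M2 : Matrix (Fin 3) (Fin 3) ℝ := !![1, 0, 0; 1, 1, 1; 0, 0, 1]

/-- `M3 = [[1,0,0],[0,1,0],[0,1,1]]`. -/
def M3 : Matrix (Fin 3) (Fin 3) ℝ := !![1, 0, 0; 0, 1, 0; 0, 1, 1]

/- A tuple `p = (p_n, p_n', q_n, …, p_1, p_1', q_1) ∈ ℕ₀^{3n}` is encoded by three
functions `P P' Q : Fin n → ℕ`, where the index `i : Fin n` corresponds to the
subscript `i + 1` (so `P ⟨0,_⟩ = p_1`, …, `P ⟨n-1,_⟩ = p_n`). -/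

/-- The transition matrix `M_p = M1^{p_n} M3^{p_n'} M2^{q_n} ⋯ M1^{p_1} M3^{p_1'} M2^{q_1}`. -/
def Mp (n : ℕ) (P P' Q : Fin n → ℕ) : Matrix (Fin 3) (Fin 3) ℝ :=
  ((List.finRange n).map fun i => M1 ^ P i.rev * M3 ^ P' i.rev * M2 ^ Q i.rev).prod

/-- Membership of the tuple `p` in `I_n`. -/
def memI (n : ℕ) (P P' Q : Fin n → ℕ) : Prop :=
  (∀ i, 0 < Q i) ∧ (∀ i, 0 < P i + P' i) ∧ (∃ j, 0 < P j) ∧ (∃ k, 0 < P' k)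

/-- Finite continued fraction: `cf [a₁, …, a_m] x = 1/(a₁ + 1/(a₂ + ⋯ + 1/(a_m + x)))`. -/
def cf (l : List ℕ) (x : ℝ) : ℝ := l.foldr (fun a y => 1 / (a + y)) x

/-- The (0-indexed) block index `k(j+1) - 1 = n - 1 - (j mod n)` used at step `j + 1`. -/
def blk (n : ℕ) (hn : 0 < n) (j : ℕ) : Fin n :=
  ⟨n - 1 - j % n, lt_of_le_of_lt (Nat.sub_le _ _) (Nat.sub_lt hn one_pos)⟩

/-- The sequence `(a₁, …, a_{2n}) = (p_n + p_n', q_n, …, p_1 + p_1', q_1)` as a list. -/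
def aList (n : ℕ) (hn : 0 < n) (P P' Q : Fin n → ℕ) : List ℕ :=
  (List.range n).flatMap fun i => [P (blk n hn i) + P' (blk n hn i), Q (blk n hn i)]

/-- `isH0 n hn P P' Q h0` says that `h0` is the number `h_{p,0}`: a real number in `(0,1)`
that is a fixed point of `x ↦ 1/(a₁ + 1/(a₂ + ⋯ + 1/(a_{2n} + x)))` (there is exactly one). -/
def isH0 (n : ℕ) (hn : 0 < n) (P P' Q : Fin n → ℕ) (h0 : ℝ) : Prop :=
  h0 ∈ Set.Ioo (0 : ℝ) 1 ∧ cf (aList n hn P P' Q) h0 = h0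

/-- The pair `(w_{p,j}, h_{p,j})`, with `w_{p,0} = 1`, `h_{p,0} = h0`, and for `j ≥ 1`:
`w_{p,j} = w_{p,j-1} − (p_{k(j)} + p'_{k(j)}) h_{p,j-1}`, `h_{p,j} = h_{p,j-1} − q_{k(j)} w_{p,j}`. -/
def wh (n : ℕ) (hn : 0 < n) (P P' Q : Fin n → ℕ) (h0 : ℝ) : ℕ → ℝ × ℝ
  | 0 => (1, h0)
  | j + 1 =>
    let prev := wh n hn P P' Q h0 j
    let b := blk n hn j
    let w := prev.1 - ((P b : ℝ) + (P' b : ℝ)) * prev.2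
    (w, prev.2 - (Q b : ℝ) * w)

/-- The width `w_{p,j}`. -/
def wseq (n : ℕ) (hn : 0 < n) (P P' Q : Fin n → ℕ) (h0 : ℝ) (j : ℕ) : ℝ :=
  (wh n hn P P' Q h0 j).1

/-- The height `h_{p,j}`. -/
def hseq (n : ℕ) (hn : 0 < n) (P P' Q : Fin n → ℕ) (h0 : ℝ) (j : ℕ) : ℝ :=
  (wh n hn P P' Q h0 j).2

/-- The split ratio `s_p = Σ_{i=0}^∞ p_{k(i+1)} h_{p,i}`. -/
def splitRatio (n : ℕ) (hn : 0 < n) (P P' Q : Fin n → ℕ) (h0 : ℝ) : ℝ :=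
  ∑' i : ℕ, (P (blk n hn i) : ℝ) * hseq n hn P P' Q h0 i

/-- The reindexing realizing the shift `T`: the tuple `T(p)` is given by the functions
`P ∘ shiftIdx n hn`, `P' ∘ shiftIdx n hn`, `Q ∘ shiftIdx n hn`. -/
def shiftIdx (n : ℕ) (hn : 0 < n) (i : Fin n) : Fin n :=
  ⟨(i.val + (n - 1)) % n, Nat.mod_lt _ hn⟩

namespace Stmt12Aux

lemma M1_mulVec (u : Fin 3 → ℝ) : M1 *ᵥ u = ![u 0 + u 1, u 1, u 2] := by
  funext i
  fin_cases i <;> simp [M1, Matrix.mulVec, dotProduct, Fin.sum_univ_succ]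

lemma M3_mulVec (u : Fin 3 → ℝ) : M3 *ᵥ u = ![u 0, u 1, u 1 + u 2] := by
  funext i
  fin_cases i <;> simp [M3, Matrix.mulVec, dotProduct, Fin.sum_univ_succ]

lemma M2_mulVec (u : Fin 3 → ℝ) : M2 *ᵥ u = ![u 0, u 0 + u 1 + u 2, u 2] := by
  funext i
  fin_cases i <;>
    simp [M2, Matrix.mulVec, dotProduct, Fin.sum_univ_succ] <;> ring

lemma M1_pow_mulVec (p : ℕ) (u : Fin 3 → ℝ) :
    (M1 ^ p) *ᵥ u = ![u 0 + p * u 1, u 1, u 2] := by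
  induction p generalizing u with
  | zero => funext i; fin_cases i <;> simp
  | succ p ih =>
      rw [pow_succ, ← Matrix.mulVec_mulVec, M1_mulVec, ih]
      funext i; fin_cases i <;> simp <;> push_cast <;> ring

lemma M3_pow_mulVec (p : ℕ) (u : Fin 3 → ℝ) :
    (M3 ^ p) *ᵥ u = ![u 0, u 1, u 2 + p * u 1] := by
  induction p generalizing u with
  | zero => funext i; fin_cases i <;> simp
  | succ p ih =>
      rw [pow_succ, ← Matrix.mulVec_mulVec, M3_mulVec, ih]
      funext i; fin_cases i <;> simp <;> push_cast <;> ring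

lemma M2_pow_mulVec (q : ℕ) (u : Fin 3 → ℝ) :
    (M2 ^ q) *ᵥ u = ![u 0, u 1 + q * (u 0 + u 2), u 2] := by
  induction q generalizing u with
  | zero => funext i; fin_cases i <;> simp
  | succ q ih =>
      rw [pow_succ, ← Matrix.mulVec_mulVec, M2_mulVec, ih]
      funext i; fin_cases i <;> simp <;> push_cast <;> ring

lemma block_mulVec (p p' q : ℕ) (u : Fin 3 → ℝ) :
    (M1 ^ p * M3 ^ p' * M2 ^ q) *ᵥ u =
      ![u 0 + p * (u 1 + q * (u 0 + u 2)),
        u 1 + q * (u 0 + u 2),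
        u 2 + p' * (u 1 + q * (u 0 + u 2))] := by
  rw [← Matrix.mulVec_mulVec, ← Matrix.mulVec_mulVec, M2_pow_mulVec, M3_pow_mulVec,
    M1_pow_mulVec]
  funext i; fin_cases i <;> simp

end Stmt12Aux
namespace Stmt12Aux

variable (n : ℕ) (P P' Q : Fin n → ℕ)

/-- The block matrix for index `j` (as a natural number; identity if `j ≥ n`). -/
def Bn (j : ℕ) : Matrix (Fin 3) (Fin 3) ℝ :=
  if h : j < n then M1 ^ P ⟨j, h⟩ * M3 ^ P' ⟨j, h⟩ * M2 ^ Q ⟨j, h⟩ else 1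

/-- Partial products of blocks. -/
def F : ℕ → Matrix (Fin 3) (Fin 3) ℝ
  | 0 => 1
  | j + 1 => Bn n P P' Q j * F j

lemma F_eq (j : ℕ) :
    F n P P' Q j = (((List.range j).map (Bn n P P' Q)).reverse).prod := by
  induction j with
  | zero => simp [F]
  | succ j ih => simp [F, List.range_succ, ih]

lemma Mp_eq_F : Mp n P P' Q = F n P P' Q n := by
  rw [F_eq, Mp]
  congr 1
  rw [← List.map_reverse]
  apply List.ext_getElem
  · simp
  · intro i h1 h2
    have hi : i < n := by simpa using h1
    simp only [List.getElem_map, List.getElem_reverse, List.length_range,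
      List.getElem_range, List.getElem_finRange, Bn, Fin.cast_mk]
    rw [dif_pos (show n - 1 - i < n by omega)]
    have hrev : (Fin.mk i hi).rev = ⟨n - 1 - i, by omega⟩ := by
      ext; simp [Fin.rev]; omega
    rw [hrev]

end Stmt12Aux
namespace Stmt12Aux

variable (n : ℕ) (P P' Q : Fin n → ℕ)

/-- The orbit of `v` under successive blocks. -/
def uvec (v : Fin 3 → ℝ) (j : ℕ) : Fin 3 → ℝ := F n P P' Q j *ᵥ v

lemma uvec_zero (v : Fin 3 → ℝ) : uvec n P P' Q v 0 = v := by
  simp [uvec, F]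

lemma uvec_succ (v : Fin 3 → ℝ) (j : ℕ) (h : j < n) :
    uvec n P P' Q v (j + 1) =
      ![uvec n P P' Q v j 0 + (P ⟨j, h⟩ : ℝ) *
          (uvec n P P' Q v j 1 + (Q ⟨j, h⟩ : ℝ) * (uvec n P P' Q v j 0 + uvec n P P' Q v j 2)),
        uvec n P P' Q v j 1 + (Q ⟨j, h⟩ : ℝ) * (uvec n P P' Q v j 0 + uvec n P P' Q v j 2),
        uvec n P P' Q v j 2 + (P' ⟨j, h⟩ : ℝ) *
          (uvec n P P' Q v j 1 + (Q ⟨j, h⟩ : ℝ) * (uvec n P P' Q v j 0 + uvec n P P' Q v j 2))] := by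
  show (Bn n P P' Q j * F n P P' Q j) *ᵥ v = _
  rw [← Matrix.mulVec_mulVec, Bn, dif_pos h, block_mulVec]
  rfl

end Stmt12Aux
namespace Stmt12Aux

variable (n : ℕ) (P P' Q : Fin n → ℕ)

lemma uvec_succ_one (v : Fin 3 → ℝ) (j : ℕ) (h : j < n) :
    uvec n P P' Q v (j + 1) 1 =
      uvec n P P' Q v j 1 +
        (Q ⟨j, h⟩ : ℝ) * (uvec n P P' Q v j 0 + uvec n P P' Q v j 2) := by
  rw [uvec_succ n P P' Q v j h]; simp

lemma uvec_succ_diff (v : Fin 3 → ℝ) (j : ℕ) (h : j < n) :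
    uvec n P P' Q v (j + 1) 0 - uvec n P P' Q v (j + 1) 2 =
      (uvec n P P' Q v j 0 - uvec n P P' Q v j 2) +
        ((P ⟨j, h⟩ : ℝ) - (P' ⟨j, h⟩ : ℝ)) * uvec n P P' Q v (j + 1) 1 := by
  rw [uvec_succ n P P' Q v j h]; simp; ring

lemma uvec_pos (v : Fin 3 → ℝ) (hv : ∀ i, 0 < v i) :
    ∀ j, j ≤ n → ∀ i, 0 < uvec n P P' Q v j i := by
  intro j
  induction j with
  | zero => intro _ i; rw [uvec_zero]; exact hv i
  | succ j ih =>
      intro hj i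
      have hjn : j < n := hj
      have h0 := ih hjn.le 0
      have h1 := ih hjn.le 1
      have h2 := ih hjn.le 2
      have hy : 0 < uvec n P P' Q v j 1 +
          (Q ⟨j, hjn⟩ : ℝ) * (uvec n P P' Q v j 0 + uvec n P P' Q v j 2) :=
        add_pos_of_pos_of_nonneg h1
          (mul_nonneg (Nat.cast_nonneg _) (add_pos h0 h2).le)
      rw [uvec_succ n P P' Q v j hjn]
      fin_cases i
      · simpa using add_pos_of_pos_of_nonneg h0 (mul_nonneg (Nat.cast_nonneg _) hy.le)
      · simpa using hy
      · simpa using add_pos_of_pos_of_nonneg h2 (mul_nonneg (Nat.cast_nonneg _) hy.le)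

end Stmt12Aux

open Stmt12Aux

/-- if `v ∈ ℝ³` has all entries positive and is an eigenvector of `M_p`
(for some real eigenvalue `μ`), then `v 0 = v 2` iff `p` is symmetric. -/
theorem stmt12 (n : ℕ) (hn : 0 < n) (P P' Q : Fin n → ℕ) (hI : memI n P P' Q)
    (v : Fin 3 → ℝ) (hv : ∀ i, 0 < v i) (μ : ℝ)
    (heig : Mp n P P' Q *ᵥ v = μ • v) :
    v 0 = v 2 ↔ ∀ i, P i = P' i := by
  have hun : uvec n P P' Q v n = μ • v := by
    rw [uvec, ← Mp_eq_F]; exact heig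
  have hpos := uvec_pos n P P' Q v hv
  -- μ > 1
  have hgrow : ∀ j, 1 ≤ j → j ≤ n → v 1 < uvec n P P' Q v j 1 := by
    intro j
    induction j with
    | zero => omega
    | succ j ih =>
        intro _ hj
        have hjn : j < n := hj
        rw [uvec_succ_one n P P' Q v j hjn]
        rcases Nat.eq_zero_or_pos j with h0 | h1
        · subst h0
          rw [uvec_zero]
          have hq : (1 : ℝ) ≤ (Q ⟨0, hjn⟩ : ℝ) := by exact_mod_cast hI.1 _
          nlinarith [hv 0, hv 2]
        · have h02 : 0 < uvec n P P' Q v j 0 + uvec n P P' Q v j 2 :=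
            add_pos (hpos j hjn.le 0) (hpos j hjn.le 2)
          have := ih h1 hjn.le
          nlinarith [Nat.cast_nonneg (α := ℝ) (Q ⟨j, hjn⟩)]
  have hμ : 1 < μ := by
    have h1 := hgrow n hn le_rfl
    rw [hun] at h1
    simp only [Pi.smul_apply, smul_eq_mul] at h1
    nlinarith [hv 1]
  have hdn : uvec n P P' Q v n 0 - uvec n P P' Q v n 2 = μ * (v 0 - v 2) := by
    rw [hun]; simp; ring
  constructor
  · -- v 0 = v 2 → symmetric
    intro h02
    by_contra hne
    push_neg at hne
    obtain ⟨i0, hi0⟩ := hne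
    set s : Finset (Fin n) := Finset.univ.filter (fun i => P i ≠ P' i) with hs
    have hsne : s.Nonempty := ⟨i0, by simp [hs, hi0]⟩
    set J : Fin n := s.max' hsne with hJdef
    have hJ : P J ≠ P' J := by
      have := s.max'_mem hsne
      simpa [hs] using this
    have hmax : ∀ k : Fin n, J < k → P k = P' k := by
      intro k hk
      by_contra hkk
      exact absurd (s.le_max' k (by simp [hs, hkk])) (not_le.mpr hk)
    -- D is constant from J+1 to n
    have hconst : ∀ m, J.val + 1 ≤ m → m ≤ n →
        uvec n P P' Q v m 0 - uvec n P P' Q v m 2 =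
          uvec n P P' Q v (J.val + 1) 0 - uvec n P P' Q v (J.val + 1) 2 := by
      intro m
      induction m with
      | zero => omega
      | succ m ih =>
          intro h1 h2
          rcases Nat.lt_or_ge m (J.val + 1) with hm | hm
          · have : m = J.val := by omega
            rw [this]
          · have hmn : m < n := h2
            have hJm : J.val < m := by omega
            have hPm : P ⟨m, hmn⟩ = P' ⟨m, hmn⟩ := hmax ⟨m, hmn⟩ (Fin.lt_def.mpr hJm)
            rw [uvec_succ_diff n P P' Q v m hmn, hPm, sub_self, zero_mul, add_zero]
            exact ih hm hmn.le
    have hJn : J.val < n := J.isLt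
    have hd0 : uvec n P P' Q v (J.val + 1) 0 - uvec n P P' Q v (J.val + 1) 2 = 0 := by
      rw [← hconst n (by omega) le_rfl, hdn, h02, sub_self, mul_zero]
    have hstepJ := uvec_succ_diff n P P' Q v J.val hJn
    have hstepH := uvec_succ_one n P P' Q v J.val hJn
    have hqJ : (1 : ℝ) ≤ (Q ⟨J.val, hJn⟩ : ℝ) := by exact_mod_cast hI.1 _
    have ha := hpos J.val hJn.le 0
    have hb := hpos J.val hJn.le 1
    have hc := hpos J.val hJn.le 2
    have hh := hpos (J.val + 1) hJn 1
    have hJeta : (⟨J.val, hJn⟩ : Fin n) = J := rfl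
    rw [hJeta] at hstepJ hstepH hqJ
    -- h_{J+1} > w_J = a + c
    have hw : uvec n P P' Q v J.val 0 + uvec n P P' Q v J.val 2 <
        uvec n P P' Q v (J.val + 1) 1 := by nlinarith
    rw [hd0] at hstepJ
    rcases Nat.lt_or_ge (P J) (P' J) with hPP | hPP
    · have hcle : (P J : ℝ) - (P' J : ℝ) ≤ -1 := by
        have : (P J : ℝ) + 1 ≤ (P' J : ℝ) := by exact_mod_cast hPP
        linarith
      nlinarith [mul_le_mul_of_nonneg_right hcle hh.le]
    · have hPP' : P' J < P J := lt_of_le_of_ne hPP (Ne.symm hJ)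
      have hcge : (1 : ℝ) ≤ (P J : ℝ) - (P' J : ℝ) := by
        have : (P' J : ℝ) + 1 ≤ (P J : ℝ) := by exact_mod_cast hPP'
        linarith
      nlinarith [mul_le_mul_of_nonneg_right hcge hh.le]
  · -- symmetric → v 0 = v 2
    intro hsym
    have hconst : ∀ j, j ≤ n →
        uvec n P P' Q v j 0 - uvec n P P' Q v j 2 = v 0 - v 2 := by
      intro j
      induction j with
      | zero => intro _; rw [uvec_zero]
      | succ j ih =>
          intro hj
          have hjn : j < n := hj
          rw [uvec_succ_diff n P P' Q v j hjn, hsym, sub_self, zero_mul, add_zero]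
          exact ih hjn.le
    have := hconst n le_rfl
    rw [hdn] at this
    have h0 : (μ - 1) * (v 0 - v 2) = 0 := by linarith
    rcases mul_eq_zero.mp h0 with h | h
    · linarith
    · linarith
end
end

section
/- For every integer n ≥ 1 and every p ∈ I_n, the split ratio satisfies s_p = 1/2 if and only if p is symmetric. -/
open Matrix

noncomputable section

lemma cf_pos (l : List ℕ) (x : ℝ) (hx : 0 < x) : 0 < cf l x := by
  induction l with
  | nil => exact hx
  | cons a t ih =>
    have h1 : (0:ℝ) < (a:ℝ) + cf t x := by positivity
    simpa [cf] using div_pos one_pos h1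

lemma blk_mod (n : ℕ) (hn : 0 < n) (j : ℕ) : blk n hn (j % n) = blk n hn j := by
  simp [blk, Nat.mod_mod_of_dvd _ dvd_rfl]

def alp (n : ℕ) (hn : 0 < n) (P P' : Fin n → ℕ) (j : ℕ) : ℕ :=
  P (blk n hn j) + P' (blk n hn j)

def bet (n : ℕ) (hn : 0 < n) (Q : Fin n → ℕ) (j : ℕ) : ℕ := Q (blk n hn j)

def Ssuf (n : ℕ) (hn : 0 < n) (P P' Q : Fin n → ℕ) (i : ℕ) : List ℕ :=
  (List.range (n - i)).flatMap fun k => [alp n hn P P' (i + k), bet n hn Q (i + k)]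

lemma Ssuf_n (n : ℕ) (hn : 0 < n) (P P' Q : Fin n → ℕ) : Ssuf n hn P P' Q n = [] := by
  simp [Ssuf]

lemma Ssuf_succ (n : ℕ) (hn : 0 < n) (P P' Q : Fin n → ℕ) (i : ℕ) (hi : i < n) :
    Ssuf n hn P P' Q i =
      alp n hn P P' i :: bet n hn Q i :: Ssuf n hn P P' Q (i + 1) := by
  have h1 : n - i = (n - (i+1)) + 1 := by omega
  have h2 : (fun a : ℕ => [alp n hn P P' (i + a.succ), bet n hn Q (i + a.succ)]) =
      fun k : ℕ => [alp n hn P P' (i + 1 + k), bet n hn Q (i + 1 + k)] := by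
    funext k
    have e1 : i + k.succ = i + 1 + k := by omega
    rw [e1]
  rw [Ssuf, h1, List.range_succ_eq_map]
  simp only [List.flatMap_cons, List.flatMap_map, Nat.add_zero, h2]
  rw [Ssuf]
  rfl

lemma cf_cons (a : ℕ) (l : List ℕ) (x : ℝ) : cf (a :: l) x = 1 / ((a : ℝ) + cf l x) := by
  simp [cf]

lemma Ssuf_zero (n : ℕ) (hn : 0 < n) (P P' Q : Fin n → ℕ) :
    Ssuf n hn P P' Q 0 = aList n hn P P' Q := by
  have h2 : (fun k : ℕ => [alp n hn P P' (0 + k), bet n hn Q (0 + k)]) =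
      fun i : ℕ => [P (blk n hn i) + P' (blk n hn i), Q (blk n hn i)] := by
    funext k
    simp [alp, bet, Nat.zero_add]
  rw [Ssuf, aList, Nat.sub_zero, h2]

/-- The continued fraction tails. -/
def Xt (n : ℕ) (hn : 0 < n) (P P' Q : Fin n → ℕ) (h0 : ℝ) (j : ℕ) : ℝ :=
  cf (Ssuf n hn P P' Q (j % n)) h0

def Yt (n : ℕ) (hn : 0 < n) (P P' Q : Fin n → ℕ) (h0 : ℝ) (j : ℕ) : ℝ :=
  1 / ((bet n hn Q j : ℝ) + Xt n hn P P' Q h0 (j + 1))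

lemma Xt_pos (n : ℕ) (hn : 0 < n) (P P' Q : Fin n → ℕ) (h0 : ℝ) (hh0 : 0 < h0) (j : ℕ) :
    0 < Xt n hn P P' Q h0 j := cf_pos _ _ hh0

lemma Yt_pos (n : ℕ) (hn : 0 < n) (P P' Q : Fin n → ℕ) (h0 : ℝ) (hh0 : 0 < h0) (j : ℕ) :
    0 < Yt n hn P P' Q h0 j := by
  have h1 : (0:ℝ) < (bet n hn Q j : ℝ) + Xt n hn P P' Q h0 (j + 1) := by
    have := Xt_pos n hn P P' Q h0 hh0 (j+1)
    positivity
  exact div_pos one_pos h1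

lemma Xt_zero (n : ℕ) (hn : 0 < n) (P P' Q : Fin n → ℕ) (h0 : ℝ)
    (hh0 : isH0 n hn P P' Q h0) : Xt n hn P P' Q h0 0 = h0 := by
  rw [Xt, Nat.zero_mod, Ssuf_zero]
  exact hh0.2

lemma alp_mod (n : ℕ) (hn : 0 < n) (P P' : Fin n → ℕ) (j : ℕ) :
    alp n hn P P' (j % n) = alp n hn P P' j := by rw [alp, alp, blk_mod]

lemma bet_mod (n : ℕ) (hn : 0 < n) (Q : Fin n → ℕ) (j : ℕ) :
    bet n hn Q (j % n) = bet n hn Q j := by rw [bet, bet, blk_mod]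

lemma Xt_rec (n : ℕ) (hn : 0 < n) (P P' Q : Fin n → ℕ) (h0 : ℝ)
    (hh0 : isH0 n hn P P' Q h0) (j : ℕ) :
    Xt n hn P P' Q h0 j = 1 / ((alp n hn P P' j : ℝ) + Yt n hn P P' Q h0 j) := by
  have hjn : j % n < n := Nat.mod_lt _ hn
  have htail : cf (Ssuf n hn P P' Q (j % n + 1)) h0 = Xt n hn P P' Q h0 (j + 1) := by
    have hmod : (j % n + 1) % n = (j + 1) % n := Nat.mod_add_mod j n 1
    rcases eq_or_lt_of_le (Nat.succ_le_of_lt hjn) with he | hlt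
    · rw [show j % n + 1 = n from he, Ssuf_n]
      have h2 : (j + 1) % n = 0 := by rw [← hmod, show j % n + 1 = n from he, Nat.mod_self]
      rw [Xt, h2, Ssuf_zero]
      exact (hh0.2).symm
    · rw [Xt, ← hmod, Nat.mod_eq_of_lt hlt]
  rw [Xt, Ssuf_succ n hn P P' Q _ hjn, cf_cons, cf_cons,
    htail, alp_mod n hn P P' j, bet_mod n hn Q j, ← Yt]

lemma wseq_zero (n : ℕ) (hn : 0 < n) (P P' Q : Fin n → ℕ) (h0 : ℝ) :
    wseq n hn P P' Q h0 0 = 1 := rfl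

lemma hseq_zero (n : ℕ) (hn : 0 < n) (P P' Q : Fin n → ℕ) (h0 : ℝ) :
    hseq n hn P P' Q h0 0 = h0 := rfl

lemma wseq_succ (n : ℕ) (hn : 0 < n) (P P' Q : Fin n → ℕ) (h0 : ℝ) (j : ℕ) :
    wseq n hn P P' Q h0 (j + 1) =
      wseq n hn P P' Q h0 j - (alp n hn P P' j : ℝ) * hseq n hn P P' Q h0 j := by
  simp [wseq, hseq, wh, alp]

lemma hseq_succ (n : ℕ) (hn : 0 < n) (P P' Q : Fin n → ℕ) (h0 : ℝ) (j : ℕ) :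
    hseq n hn P P' Q h0 (j + 1) =
      hseq n hn P P' Q h0 j - (bet n hn Q j : ℝ) * wseq n hn P P' Q h0 (j + 1) := by
  simp only [wseq, hseq, wh, bet]

lemma inv_main (n : ℕ) (hn : 0 < n) (P P' Q : Fin n → ℕ) (h0 : ℝ)
    (hh0 : isH0 n hn P P' Q h0) (j : ℕ) :
    0 < wseq n hn P P' Q h0 j ∧
      hseq n hn P P' Q h0 j = Xt n hn P P' Q h0 j * wseq n hn P P' Q h0 j := by
  have h0pos : 0 < h0 := hh0.1.1
  induction j with
  | zero =>
    refine ⟨by rw [wseq_zero]; norm_num, ?_⟩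
    rw [wseq_zero, hseq_zero, Xt_zero n hn P P' Q h0 hh0, mul_one]
  | succ j ih =>
    obtain ⟨hw, hh⟩ := ih
    have hX := Xt_pos n hn P P' Q h0 h0pos j
    have hX1 := Xt_pos n hn P P' Q h0 h0pos (j + 1)
    have hY := Yt_pos n hn P P' Q h0 h0pos j
    have hXd : (0:ℝ) < (alp n hn P P' j : ℝ) + Yt n hn P P' Q h0 j := by positivity
    have hYd : (0:ℝ) < (bet n hn Q j : ℝ) + Xt n hn P P' Q h0 (j + 1) := by positivity
    have hXY : Xt n hn P P' Q h0 j * ((alp n hn P P' j : ℝ) + Yt n hn P P' Q h0 j) = 1 := by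
      rw [Xt_rec n hn P P' Q h0 hh0 j]
      field_simp
    have hYX : Yt n hn P P' Q h0 j * ((bet n hn Q j : ℝ) + Xt n hn P P' Q h0 (j + 1)) = 1 := by
      rw [Yt]
      field_simp
    have hwsucc : wseq n hn P P' Q h0 (j + 1) =
        Xt n hn P P' Q h0 j * Yt n hn P P' Q h0 j * wseq n hn P P' Q h0 j := by
      rw [wseq_succ, hh]
      linear_combination (-(wseq n hn P P' Q h0 j)) * hXY
    constructor
    · rw [hwsucc]; positivity
    · rw [hseq_succ, hwsucc, hh]
      linear_combination (-(Xt n hn P P' Q h0 j * wseq n hn P P' Q h0 j)) * hYX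

lemma wseq_pos (n : ℕ) (hn : 0 < n) (P P' Q : Fin n → ℕ) (h0 : ℝ)
    (hh0 : isH0 n hn P P' Q h0) (j : ℕ) : 0 < wseq n hn P P' Q h0 j :=
  (inv_main n hn P P' Q h0 hh0 j).1

lemma hseq_pos (n : ℕ) (hn : 0 < n) (P P' Q : Fin n → ℕ) (h0 : ℝ)
    (hh0 : isH0 n hn P P' Q h0) (j : ℕ) : 0 < hseq n hn P P' Q h0 j := by
  rw [(inv_main n hn P P' Q h0 hh0 j).2]
  exact mul_pos (Xt_pos n hn P P' Q h0 hh0.1.1 j) (wseq_pos n hn P P' Q h0 hh0 j)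

lemma hseq_lt (n : ℕ) (hn : 0 < n) (P P' Q : Fin n → ℕ) (hI : memI n P P' Q) (h0 : ℝ)
    (hh0 : isH0 n hn P P' Q h0) (j : ℕ) :
    wseq n hn P P' Q h0 (j + 1) < hseq n hn P P' Q h0 j := by
  have h1 := hseq_pos n hn P P' Q h0 hh0 (j + 1)
  rw [hseq_succ] at h1
  have hb : (1:ℝ) ≤ (bet n hn Q j : ℝ) := by
    have := hI.1 (blk n hn j)
    rw [bet]
    exact_mod_cast this
  nlinarith [wseq_pos n hn P P' Q h0 hh0 (j + 1)]

lemma sum_alp_hseq (n : ℕ) (hn : 0 < n) (P P' Q : Fin n → ℕ) (h0 : ℝ) (N : ℕ) :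
    ∑ i ∈ Finset.range N, (alp n hn P P' i : ℝ) * hseq n hn P P' Q h0 i =
      1 - wseq n hn P P' Q h0 N := by
  induction N with
  | zero => simp [wseq_zero]
  | succ N ih =>
    rw [Finset.sum_range_succ, ih, wseq_succ]
    ring

lemma summable_alp_hseq (n : ℕ) (hn : 0 < n) (P P' Q : Fin n → ℕ) (h0 : ℝ)
    (hh0 : isH0 n hn P P' Q h0) :
    Summable (fun i => (alp n hn P P' i : ℝ) * hseq n hn P P' Q h0 i) := by
  apply summable_of_sum_range_le (c := 1)
  · intro i
    have := hseq_pos n hn P P' Q h0 hh0 i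
    positivity
  · intro N
    rw [sum_alp_hseq]
    have := wseq_pos n hn P P' Q h0 hh0 N
    linarith

lemma tendsto_wseq (n : ℕ) (hn : 0 < n) (P P' Q : Fin n → ℕ) (hI : memI n P P' Q) (h0 : ℝ)
    (hh0 : isH0 n hn P P' Q h0) :
    Filter.Tendsto (wseq n hn P P' Q h0) Filter.atTop (nhds 0) := by
  have hh_to_zero : Filter.Tendsto (hseq n hn P P' Q h0) Filter.atTop (nhds 0) := by
    have hterm := (summable_alp_hseq n hn P P' Q h0 hh0).tendsto_atTop_zero
    apply squeeze_zero (fun i => (hseq_pos n hn P P' Q h0 hh0 i).le) _ hterm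
    intro i
    have ha : (1:ℝ) ≤ (alp n hn P P' i : ℝ) := by
      have := hI.2.1 (blk n hn i)
      rw [alp]
      exact_mod_cast this
    nlinarith [hseq_pos n hn P P' Q h0 hh0 i]
  rw [← Filter.tendsto_add_atTop_iff_nat 1]
  exact squeeze_zero (fun j => (wseq_pos n hn P P' Q h0 hh0 (j + 1)).le)
    (fun j => (hseq_lt n hn P P' Q hI h0 hh0 j).le) hh_to_zero

lemma hasSum_alp_hseq (n : ℕ) (hn : 0 < n) (P P' Q : Fin n → ℕ) (hI : memI n P P' Q) (h0 : ℝ)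
    (hh0 : isH0 n hn P P' Q h0) :
    HasSum (fun i => (alp n hn P P' i : ℝ) * hseq n hn P P' Q h0 i) 1 := by
  have hs := summable_alp_hseq n hn P P' Q h0 hh0
  have h1 := hs.hasSum.tendsto_sum_nat
  have h2 : Filter.Tendsto
      (fun N => ∑ i ∈ Finset.range N, (alp n hn P P' i : ℝ) * hseq n hn P P' Q h0 i)
      Filter.atTop (nhds 1) := by
    simp only [sum_alp_hseq]
    have := (tendsto_wseq n hn P P' Q hI h0 hh0).const_sub 1
    simpa using this
  have := tendsto_nhds_unique h1 h2
  rw [← this]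
  exact hs.hasSum

lemma tsum_tail (n : ℕ) (hn : 0 < n) (P P' Q : Fin n → ℕ) (hI : memI n P P' Q) (h0 : ℝ)
    (hh0 : isH0 n hn P P' Q h0) (m : ℕ) :
    ∑' i : ℕ, (alp n hn P P' (i + m) : ℝ) * hseq n hn P P' Q h0 (i + m) =
      wseq n hn P P' Q h0 m := by
  have hs := summable_alp_hseq n hn P P' Q h0 hh0
  have h1 := Summable.sum_add_tsum_nat_add (f := fun i => (alp n hn P P' i : ℝ) * hseq n hn P P' Q h0 i) m hs
  rw [(hasSum_alp_hseq n hn P P' Q hI h0 hh0).tsum_eq, sum_alp_hseq] at h1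
  linarith

lemma blk_surj (n : ℕ) (hn : 0 < n) (j : Fin n) : blk n hn (n - 1 - j.val) = j := by
  have hj := j.isLt
  apply Fin.ext
  show n - 1 - (n - 1 - j.val) % n = j.val
  rw [Nat.mod_eq_of_lt (by omega)]
  omega

theorem stmt13_aux (n : ℕ) (hn : 0 < n) (P P' Q : Fin n → ℕ) (hI : memI n P P' Q)
    (h0 : ℝ) (hh0 : isH0 n hn P P' Q h0) :
    splitRatio n hn P P' Q h0 = 1 / 2 ↔ ∀ i, P i = P' i := by
  classical
  set h : ℕ → ℝ := hseq n hn P P' Q h0 with hh_def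
  have hpos : ∀ i, 0 < h i := hseq_pos n hn P P' Q h0 hh0
  set f1 : ℕ → ℝ := fun i => (P (blk n hn i) : ℝ) * h i with hf1
  set f2 : ℕ → ℝ := fun i => (P' (blk n hn i) : ℝ) * h i with hf2
  set F : ℕ → ℝ := fun i => (alp n hn P P' i : ℝ) * h i with hF
  have hadd : ∀ i, f1 i + f2 i = F i := by
    intro i
    simp only [hf1, hf2, hF, alp]
    push_cast
    ring
  have hFsum : HasSum F 1 := hasSum_alp_hseq n hn P P' Q hI h0 hh0
  have hFs : Summable F := hFsum.summable
  have hs1 : Summable f1 := by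
    apply hFs.of_nonneg_of_le (fun i => mul_nonneg (Nat.cast_nonneg _) (hpos i).le)
    intro i
    simp only [hf1, hF, alp]
    have hle : (P (blk n hn i) : ℝ) ≤ ((P (blk n hn i) + P' (blk n hn i) : ℕ) : ℝ) := by
      push_cast; linarith [(P' (blk n hn i)).cast_nonneg (α := ℝ)]
    exact mul_le_mul_of_nonneg_right hle (hpos i).le
  have hs2 : Summable f2 := by
    apply hFs.of_nonneg_of_le (fun i => mul_nonneg (Nat.cast_nonneg _) (hpos i).le)
    intro i
    simp only [hf2, hF, alp]
    have hle : (P' (blk n hn i) : ℝ) ≤ ((P (blk n hn i) + P' (blk n hn i) : ℕ) : ℝ) := by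
      push_cast; linarith [(P (blk n hn i)).cast_nonneg (α := ℝ)]
    exact mul_le_mul_of_nonneg_right hle (hpos i).le
  have hsum12 : ∑' i, f1 i + ∑' i, f2 i = 1 := by
    rw [← Summable.tsum_add hs1 hs2]
    rw [← hFsum.tsum_eq]
    exact tsum_congr hadd
  have hsplit_eq : splitRatio n hn P P' Q h0 = ∑' i, f1 i := rfl
  constructor
  · -- s = 1/2 → symmetric
    intro hs
    by_contra hne
    push_neg at hne
    obtain ⟨jj, hjj⟩ := hne
    have hex : ∃ i : ℕ, P (blk n hn i) ≠ P' (blk n hn i) :=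
      ⟨n - 1 - jj.val, by rw [blk_surj n hn jj]; exact hjj⟩
    set i0 := Nat.find hex with hi0def
    have hi0 : P (blk n hn i0) ≠ P' (blk n hn i0) := Nat.find_spec hex
    have hmin : ∀ i < i0, P (blk n hn i) = P' (blk n hn i) := fun i hi =>
      not_not.mp (Nat.find_min hex hi)
    set g : ℕ → ℝ := fun i => f1 i - f2 i with hgdef
    have hgs : Summable g := hs1.sub hs2
    have hs2' : ∑' i, f2 i = 1 / 2 := by
      rw [hsplit_eq] at hs
      linarith
    have htsum0 : ∑' i, g i = 0 := by
      rw [hgdef]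
      rw [Summable.tsum_sub hs1 hs2, ← hsplit_eq, hs, hs2']
      ring
    have hsplit := Summable.sum_add_tsum_nat_add (f := g) (i0 + 1) hgs
    have hhead : ∑ i ∈ Finset.range (i0 + 1), g i = g i0 := by
      rw [Finset.sum_range_succ, Finset.sum_eq_zero, zero_add]
      intro i hi
      have := hmin i (Finset.mem_range.mp hi)
      simp only [hgdef, hf1, hf2, this, sub_self]
    rw [hhead, htsum0] at hsplit
    have hgeq : g i0 = -∑' i, g (i + (i0 + 1)) := by linarith
    -- bound the tail
    have hgtail : Summable (fun i => g (i + (i0 + 1))) := (summable_nat_add_iff (i0 + 1)).2 hgs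
    have hFtail : Summable (fun i => F (i + (i0 + 1))) := (summable_nat_add_iff (i0 + 1)).2 hFs
    have habs_le : ∀ k, |g k| ≤ F k := by
      intro k
      simp only [hgdef, hf1, hf2, hF, alp, ← sub_mul, abs_mul, abs_of_pos (hpos k)]
      apply mul_le_mul_of_nonneg_right _ (hpos k).le
      rw [abs_le]
      push_cast
      constructor <;> nlinarith [(P (blk n hn k)).cast_nonneg (α := ℝ),
        (P' (blk n hn k)).cast_nonneg (α := ℝ)]
    have htail_bound : |∑' i, g (i + (i0 + 1))| ≤ wseq n hn P P' Q h0 (i0 + 1) := by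
      have h1 : |∑' i, g (i + (i0 + 1))| ≤ ∑' i, |g (i + (i0 + 1))| := by
        simpa [Real.norm_eq_abs] using norm_tsum_le_tsum_norm (f := fun i => g (i + (i0 + 1)))
          (by simpa [Real.norm_eq_abs] using hgtail.abs)
      have h2 : ∑' i, |g (i + (i0 + 1))| ≤ ∑' i, F (i + (i0 + 1)) :=
        Summable.tsum_le_tsum (fun i => habs_le _) hgtail.abs hFtail
      have h3 : ∑' i, F (i + (i0 + 1)) = wseq n hn P P' Q h0 (i0 + 1) :=
        tsum_tail n hn P P' Q hI h0 hh0 (i0 + 1)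
      linarith
    have hone_le : (1:ℝ) ≤ |(P (blk n hn i0) : ℝ) - (P' (blk n hn i0) : ℝ)| := by
      have hz : ((P (blk n hn i0) : ℤ) - (P' (blk n hn i0) : ℤ)) ≠ 0 := by
        intro hc
        apply hi0
        omega
      have := Int.one_le_abs hz
      calc (1:ℝ) ≤ ((|(P (blk n hn i0) : ℤ) - (P' (blk n hn i0) : ℤ)| : ℤ) : ℝ) := by
            exact_mod_cast this
        _ = |(P (blk n hn i0) : ℝ) - (P' (blk n hn i0) : ℝ)| := by
            push_cast [Int.cast_abs]
            ring_nf
    have hgabs : h i0 ≤ |g i0| := by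
      simp only [hgdef, hf1, hf2, ← sub_mul, abs_mul, abs_of_pos (hpos i0)]
      nlinarith [hpos i0]
    have hlast := hseq_lt n hn P P' Q hI h0 hh0 i0
    rw [hgeq, abs_neg] at hgabs
    have : h i0 ≤ wseq n hn P P' Q h0 (i0 + 1) := le_trans hgabs htail_bound
    exact absurd this (not_le.mpr hlast)
  · -- symmetric → s = 1/2
    intro hsym
    have : f1 = f2 := by
      funext i
      simp only [hf1, hf2, hsym (blk n hn i)]
    rw [hsplit_eq]
    rw [this] at hsum12 ⊢
    linarith


/-- `s_p = 1/2` iff `p` is symmetric. -/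
theorem stmt13 (n : ℕ) (hn : 0 < n) (P P' Q : Fin n → ℕ) (hI : memI n P P' Q)
    (h0 : ℝ) (hh0 : isH0 n hn P P' Q h0) :
    splitRatio n hn P P' Q h0 = 1 / 2 ↔ ∀ i, P i = P' i := by
  exact stmt13_aux n hn P P' Q hI h0 hh0
end
end

section
/- Let q ≥ 1 and p ≥ 0 be integers, and let x = (x, y, z)ᵀ ∈ ℝ³ be a vector with all entries positive. Then the first entry of the vector M1^p · M3^p · M2^q · x is less than or equal to its third entry if and only if x ≤ z. -/
open Matrix

noncomputable section

lemma M1_pow (p : ℕ) : M1 ^ p = !![1, (p:ℝ), 0; 0, 1, 0; 0, 0, 1] := by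
  induction p with
  | zero => simp [Matrix.one_fin_three]
  | succ n ih =>
    rw [pow_succ, ih, M1]
    push_cast
    ext i j
    fin_cases i <;> fin_cases j <;>
      simp [Matrix.mul_apply, Fin.sum_univ_succ, Matrix.vecHead, Matrix.vecTail] <;> ring

lemma M3_pow (p : ℕ) : M3 ^ p = !![1, 0, 0; 0, 1, 0; 0, (p:ℝ), 1] := by
  induction p with
  | zero => simp [Matrix.one_fin_three]
  | succ n ih =>
    rw [pow_succ, ih, M3]
    push_cast
    ext i j
    fin_cases i <;> fin_cases j <;>
      simp [Matrix.mul_apply, Fin.sum_univ_succ, Matrix.vecHead, Matrix.vecTail] <;> ring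

lemma M2_pow (q : ℕ) : M2 ^ q = !![1, 0, 0; (q:ℝ), 1, (q:ℝ); 0, 0, 1] := by
  induction q with
  | zero => simp [Matrix.one_fin_three]
  | succ n ih =>
    rw [pow_succ, ih, M2]
    push_cast
    ext i j
    fin_cases i <;> fin_cases j <;>
      simp [Matrix.mul_apply, Fin.sum_univ_succ, Matrix.vecHead, Matrix.vecTail] <;> ring

/-- for `q ≥ 1`, `p ≥ 0` and a positive vector `(x,y,z)ᵀ`, the first
entry of `M1^p · M3^p · M2^q · (x,y,z)ᵀ` is `≤` its third entry iff `x ≤ z`. -/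
theorem stmt14 (p q : ℕ) (hq : 1 ≤ q) (x y z : ℝ)
    (hx : 0 < x) (hy : 0 < y) (hz : 0 < z) :
    ((M1 ^ p * M3 ^ p * M2 ^ q) *ᵥ ![x, y, z]) 0
      ≤ ((M1 ^ p * M3 ^ p * M2 ^ q) *ᵥ ![x, y, z]) 2 ↔ x ≤ z := by
  rw [M1_pow, M3_pow, M2_pow]
  have h0 : ((!![1, (p:ℝ), 0; 0, 1, 0; 0, 0, 1] * !![1, 0, 0; 0, 1, 0; 0, (p:ℝ), 1] *
      !![1, 0, 0; (q:ℝ), 1, (q:ℝ); 0, 0, 1]) *ᵥ ![x, y, z]) 0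
      = (1 + p*q)*x + p*y + p*q*z := by
    simp [Matrix.mul_apply, Matrix.mulVec, dotProduct, Fin.sum_univ_succ]
    ring
  have h2 : ((!![1, (p:ℝ), 0; 0, 1, 0; 0, 0, 1] * !![1, 0, 0; 0, 1, 0; 0, (p:ℝ), 1] *
      !![1, 0, 0; (q:ℝ), 1, (q:ℝ); 0, 0, 1]) *ᵥ ![x, y, z]) 2
      = p*q*x + p*y + (1 + p*q)*z := by
    simp [Matrix.mul_apply, Matrix.mulVec, dotProduct, Fin.sum_univ_succ]
    ring
  rw [h0, h2]
  constructor <;> intro h <;> nlinarith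
end
end

section
/- Let x = (x, y, z)ᵀ ∈ ℝ³ be a vector with all entries positive and x ≠ z. Then for all integers q ≥ 1 and p, p' ≥ 0 (possibly p = p'), the first and third entries of the vector M1^p · M3^{p'} · M2^q · x are distinct. -/
open Matrix

noncomputable section

/-- if `(x,y,z)ᵀ` is positive with `x ≠ z`, then for all `q ≥ 1` and
`p, p' ≥ 0`, the first and third entries of `M1^p · M3^{p'} · M2^q · (x,y,z)ᵀ` differ. -/
theorem stmt17 (x y z : ℝ) (hx : 0 < x) (hy : 0 < y) (hz : 0 < z) (hxz : x ≠ z) :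
    ∀ (q : ℕ), 1 ≤ q → ∀ p p' : ℕ,
      ((M1 ^ p * M3 ^ p' * M2 ^ q) *ᵥ ![x, y, z]) 0
        ≠ ((M1 ^ p * M3 ^ p' * M2 ^ q) *ᵥ ![x, y, z]) 2 := by
  intro q hq p p'
  rw [M1_pow, M3_pow, M2_pow]
  have h0 : ((!![1, (p:ℝ), 0; 0, 1, 0; 0, 0, 1] * !![1, 0, 0; 0, 1, 0; 0, (p':ℝ), 1]
      * !![1, 0, 0; (q:ℝ), 1, (q:ℝ); 0, 0, 1]) *ᵥ ![x, y, z]) 0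
      = x + p * (q * x + y + q * z) := by
    simp [Matrix.mul_apply, Matrix.mulVec, dotProduct, Fin.sum_univ_three]
    ring
  have h2 : ((!![1, (p:ℝ), 0; 0, 1, 0; 0, 0, 1] * !![1, 0, 0; 0, 1, 0; 0, (p':ℝ), 1]
      * !![1, 0, 0; (q:ℝ), 1, (q:ℝ); 0, 0, 1]) *ᵥ ![x, y, z]) 2
      = z + p' * (q * x + y + q * z) := by
    simp [Matrix.mul_apply, Matrix.mulVec, dotProduct, Fin.sum_univ_three]
    ring
  rw [h0, h2]
  have hq1 : (1:ℝ) ≤ q := by exact_mod_cast hq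
  rcases lt_trichotomy p p' with h | h | h
  · have hd : (1:ℝ) ≤ (p':ℝ) - p := by
      have h1 : p + 1 ≤ p' := h
      have h2 := (Nat.cast_le (α := ℝ)).2 h1
      push_cast at h2; linarith
    have hS : (0:ℝ) < ↑q * x + y + ↑q * z := by nlinarith
    intro he
    nlinarith [mul_le_mul_of_nonneg_right hd hS.le,
      mul_le_mul_of_nonneg_right hq1 hx.le, mul_le_mul_of_nonneg_right hq1 hz.le]
  · subst h; intro he; exact hxz (by linarith)
  · have hd : (1:ℝ) ≤ (p:ℝ) - p' := by
      have h1 : p' + 1 ≤ p := h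
      have h2 := (Nat.cast_le (α := ℝ)).2 h1
      push_cast at h2; linarith
    have hS : (0:ℝ) < ↑q * x + y + ↑q * z := by nlinarith
    intro he
    nlinarith [mul_le_mul_of_nonneg_right hd hS.le,
      mul_le_mul_of_nonneg_right hq1 hx.le, mul_le_mul_of_nonneg_right hq1 hz.le]
end
end
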